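/- The GMRE of the GHZ state Φ^d on (ℂ^d)^{⊗k} equals log₂ d: R(Φ^d) = log₂ d. -/

import Mathlib

open scoped BigOperators ComplexOrder

noncomputable section

/-- Index type of a `k`-partite system with local dimensions `d j`. -/
abbrev PIdx (k : ℕ) (d : Fin k → ℕ) := ∀ j : Fin k, Fin (d j)

/-- The trace norm `‖X‖₁ = Tr[√(XᴴX)]`. -/
noncomputable def traceNorm {n : Type*} [Fintype n] [DecidableEq n] (X : Matrix n n ℂ) : ℝ :=
  ((((Matrix.posSemidef_conjTranspose_mul_self X).1.eigenvectorUnitary : Matrix n n ℂ) *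
      Matrix.diagonal ((fun x : ℝ => ((Real.sqrt x : ℝ) : ℂ)) ∘
        (Matrix.posSemidef_conjTranspose_mul_self X).1.eigenvalues) *
      (star (Matrix.posSemidef_conjTranspose_mul_self X).1.eigenvectorUnitary : Matrix n n ℂ)).trace).re

/-- Partial transpose on the parties in `S`. -/
def partialTranspose {k : ℕ} {d : Fin k → ℕ} (S : Finset (Fin k))
    (X : Matrix (PIdx k d) (PIdx k d) ℂ) : Matrix (PIdx k d) (PIdx k d) ℂ :=
  Matrix.of fun a b =>
    X (fun j => if j ∈ S then b j else a j) (fun j => if j ∈ S then a j else b j)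

/-- The set `M` of bipartition labels: nonempty subsets of the parties not containing party `0`. -/
def Bipartitions (k : ℕ) : Finset (Finset (Fin k)) :=
  Finset.univ.filter fun S => S.Nonempty ∧ ∀ i ∈ S, i.val ≠ 0

/-- A quantum state: PSD with unit trace. -/
def IsState {n : Type*} [Fintype n] (ρ : Matrix n n ℂ) : Prop :=
  ρ.PosSemidef ∧ ρ.trace = 1

/-- The Rains set `T(H_k)`. -/
def RainsSet (k : ℕ) (d : Fin k → ℕ) : Set (Matrix (PIdx k d) (PIdx k d) ℂ) :=
  {τ | τ.PosSemidef ∧ ∃ f : Finset (Fin k) → Matrix (PIdx k d) (PIdx k d) ℂ,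
    (∀ S ∈ Bipartitions k, (f S).PosSemidef) ∧
    τ = ∑ S ∈ Bipartitions k, f S ∧
    ∑ S ∈ Bipartitions k, traceNorm (partialTranspose S (f S)) ≤ 1}

/-- Apply a real function to a Hermitian matrix via the spectral decomposition. -/
noncomputable def herCfc {n : Type*} [Fintype n] [DecidableEq n] {A : Matrix n n ℂ}
    (hA : A.IsHermitian) (f : ℝ → ℝ) : Matrix n n ℂ :=
  (hA.eigenvectorUnitary : Matrix n n ℂ) *
    Matrix.diagonal (fun i => (f (hA.eigenvalues i) : ℂ)) *
    (star hA.eigenvectorUnitary : Matrix n n ℂ)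

/-- `log₂` of a Hermitian matrix, computed on its support. -/
noncomputable def matLog2 {n : Type*} [Fintype n] [DecidableEq n] (A : Matrix n n ℂ) :
    Matrix n n ℂ :=
  if hA : A.IsHermitian then herCfc hA (fun x => if x ≤ 0 then 0 else Real.logb 2 x) else 0

/-- `supp ρ ⊆ supp σ`, expressed as `ker σ ⊆ ker ρ`. -/
def SuppLE {n : Type*} [Fintype n] (ρ σ : Matrix n n ℂ) : Prop :=
  ∀ v : n → ℂ, σ.mulVec v = 0 → ρ.mulVec v = 0

open Classical in
/-- Quantum relative entropy `D(ρ‖σ)`, valued in `ℝ ∪ {+∞}`. -/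
noncomputable def relEnt {n : Type*} [Fintype n] [DecidableEq n] (ρ σ : Matrix n n ℂ) : EReal :=
  if SuppLE ρ σ then ((((ρ * (matLog2 ρ - matLog2 σ)).trace).re : ℝ) : EReal) else ⊤

/-- The genuine multipartite Rains entanglement (GMRE). -/
noncomputable def GMRE {k : ℕ} {d : Fin k → ℕ} (ρ : Matrix (PIdx k d) (PIdx k d) ℂ) : EReal :=
  ⨅ τ ∈ RainsSet k d, relEnt ρ τ

/-- Real power of a Hermitian matrix, computed on its support. -/
noncomputable def matPow {n : Type*} [Fintype n] [DecidableEq n] (A : Matrix n n ℂ) (p : ℝ) :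
    Matrix n n ℂ :=
  if hA : A.IsHermitian then herCfc hA (fun x => if x ≤ 0 then 0 else x ^ p) else 0

open Classical in
/-- Sandwiched Rényi relative entropy `D̃_α(ρ‖σ)`. -/
noncomputable def sandRenyi {n : Type*} [Fintype n] [DecidableEq n] (α : ℝ)
    (ρ σ : Matrix n n ℂ) : EReal :=
  if 1 < α ∧ ¬ SuppLE ρ σ then ⊤
  else ((((α - 1)⁻¹ * Real.logb 2
    (((matPow (matPow σ ((1 - α) / (2 * α)) * ρ * matPow σ ((1 - α) / (2 * α))) α).trace).re)) : ℝ)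
    : EReal)

/-- The multipartite sandwiched Rényi–Rains entanglement. -/
noncomputable def RenyiRains {k : ℕ} {d : Fin k → ℕ} (α : ℝ)
    (ρ : Matrix (PIdx k d) (PIdx k d) ℂ) : EReal :=
  ⨅ τ ∈ RainsSet k d, sandRenyi α ρ τ

/-- Complete positivity of a linear map on matrices. -/
def IsCP {n n' : Type*} [Fintype n] [DecidableEq n] [Fintype n'] [DecidableEq n']
    (P : Matrix n n ℂ →ₗ[ℂ] Matrix n' n' ℂ) : Prop :=
  ∀ (m : ℕ) (X : Matrix (Fin m × n) (Fin m × n) ℂ), X.PosSemidef →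
    (Matrix.of fun p q : Fin m × n' =>
      P (Matrix.of fun a b => X (p.1, a) (q.1, b)) p.2 q.2).PosSemidef

/-- Partial transpose as a linear map. -/
def ptMap {k : ℕ} {d : Fin k → ℕ} (S : Finset (Fin k)) :
    Matrix (PIdx k d) (PIdx k d) ℂ →ₗ[ℂ] Matrix (PIdx k d) (PIdx k d) ℂ where
  toFun := partialTranspose S
  map_add' X Y := by ext a b; simp [partialTranspose]
  map_smul' c X := by ext a b; simp [partialTranspose]

/-- A selective multipartite PPT operation. -/
def IsSelectivePPT {k : ℕ} {d d' : Fin k → ℕ} {X : Type*} [Fintype X]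
    (P : X → (Matrix (PIdx k d) (PIdx k d) ℂ →ₗ[ℂ] Matrix (PIdx k d') (PIdx k d') ℂ)) : Prop :=
  (∀ x, IsCP (P x)) ∧
  (∀ x, ∀ S ∈ Bipartitions k, IsCP ((ptMap S).comp ((P x).comp (ptMap S)))) ∧
  (∀ A, (∑ x, P x A).trace = A.trace)

/-- A PPT mixture. -/
def IsPPTMixture {k : ℕ} {d : Fin k → ℕ} (σ : Matrix (PIdx k d) (PIdx k d) ℂ) : Prop :=
  ∃ (r : Finset (Fin k) → ℝ) (ω : Finset (Fin k) → Matrix (PIdx k d) (PIdx k d) ℂ),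
    (∀ S ∈ Bipartitions k, 0 ≤ r S) ∧ (∑ S ∈ Bipartitions k, r S = 1) ∧
    (∀ S ∈ Bipartitions k, IsState (ω S) ∧ (partialTranspose S (ω S)).PosSemidef) ∧
    σ = ∑ S ∈ Bipartitions k, (r S : ℂ) • ω S

open Classical in
/-- The GHZ state `Φ^d` on `(ℂ^d)^{⊗k}`. -/
noncomputable def GHZ (k d : ℕ) :
    Matrix (PIdx k fun _ => d) (PIdx k fun _ => d) ℂ :=
  (d : ℂ)⁻¹ • ∑ i : Fin d, ∑ j : Fin d,
    Matrix.of (fun a b : PIdx k fun _ => d =>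
      if (∀ l, a l = i) ∧ (∀ l, b l = j) then (1 : ℂ) else 0)

open Classical in
/-- The completely dephased GHZ state `Φ̄^d`. -/
noncomputable def dephGHZ (k d : ℕ) :
    Matrix (PIdx k fun _ => d) (PIdx k fun _ => d) ℂ :=
  (d : ℂ)⁻¹ • ∑ i : Fin d,
    Matrix.of (fun a b : PIdx k fun _ => d =>
      if (∀ l, a l = i) ∧ (∀ l, b l = i) then (1 : ℂ) else 0)

/-- Binary entropy. -/
noncomputable def h2 (p : ℝ) : ℝ := -(p * Real.logb 2 p) - (1 - p) * Real.logb 2 (1 - p)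

/-- Binary relative entropy `D((a,1−a)‖(b,1−b))`. -/
noncomputable def binRelEnt (a b : ℝ) : ℝ :=
  a * Real.logb 2 (a / b) + (1 - a) * Real.logb 2 ((1 - a) / (1 - b))

end



noncomputable section

namespace Aux

open Matrix

variable {n : Type*} [Fintype n] [DecidableEq n] {A : Matrix n n ℂ} (hA : A.IsHermitian)

/-- Sandwich of a diagonal matrix by the eigenvector unitary. -/
noncomputable def sand (d : n → ℂ) : Matrix n n ℂ :=
  (hA.eigenvectorUnitary : Matrix n n ℂ) * Matrix.diagonal d *
    (star hA.eigenvectorUnitary : Matrix n n ℂ)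

lemma V_mul_star :
    (hA.eigenvectorUnitary : Matrix n n ℂ) * (star hA.eigenvectorUnitary : Matrix n n ℂ) = 1 :=
  (Matrix.mem_unitaryGroup_iff).mp hA.eigenvectorUnitary.2

lemma star_mul_V :
    (star hA.eigenvectorUnitary : Matrix n n ℂ) * (hA.eigenvectorUnitary : Matrix n n ℂ) = 1 :=
  (Matrix.mem_unitaryGroup_iff').mp hA.eigenvectorUnitary.2

lemma herCfc_eq_sand (f : ℝ → ℝ) :
    herCfc hA f = sand hA (fun i => (f (hA.eigenvalues i) : ℂ)) := rfl

lemma sand_spectral : sand hA (fun i => (hA.eigenvalues i : ℂ)) = A := by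
  unfold sand
  have := hA.spectral_theorem
  rw [Unitary.conjStarAlgAut_apply] at this
  exact this.symm

lemma herCfc_id : herCfc hA (fun x => x) = A := sand_spectral hA

lemma sand_congr {d e : n → ℂ} (h : ∀ i, d i = e i) : sand hA d = sand hA e := by
  unfold sand; rw [funext h]

lemma sand_mul (d e : n → ℂ) : sand hA d * sand hA e = sand hA (fun i => d i * e i) := by
  unfold sand
  set V := (hA.eigenvectorUnitary : Matrix n n ℂ) with hV
  simp only [Matrix.mul_assoc]
  rw [← Matrix.mul_assoc (star V) V, star_mul_V hA, Matrix.one_mul,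
    ← Matrix.mul_assoc (Matrix.diagonal d) (Matrix.diagonal e),
    Matrix.diagonal_mul_diagonal]

lemma sand_smul (c : ℂ) (d : n → ℂ) : c • sand hA d = sand hA (fun i => c * d i) := by
  unfold sand
  rw [← Matrix.smul_mul, ← Matrix.mul_smul, ← Matrix.diagonal_smul]
  rfl

lemma sand_add (d e : n → ℂ) : sand hA d + sand hA e = sand hA (fun i => d i + e i) := by
  unfold sand
  rw [← Matrix.add_mul, ← Matrix.mul_add, ← Matrix.diagonal_add]

lemma sand_sub (d e : n → ℂ) : sand hA d - sand hA e = sand hA (fun i => d i - e i) := by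
  unfold sand
  rw [← Matrix.sub_mul, ← Matrix.mul_sub, ← Matrix.diagonal_sub]

lemma sand_one : sand hA (fun _ => (1 : ℂ)) = 1 := by
  unfold sand
  have : Matrix.diagonal (fun _ : n => (1 : ℂ)) = 1 := Matrix.diagonal_one
  rw [this, Matrix.mul_one, V_mul_star hA]

lemma sand_const (c : ℂ) : sand hA (fun _ => c) = c • 1 := by
  have := sand_smul hA c (fun _ => 1)
  rw [sand_one hA] at this
  rw [this]
  exact sand_congr hA (fun i => (mul_one c).symm)

lemma sand_isHermitian {d : n → ℂ} (hd : ∀ i, star (d i) = d i) :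
    (sand hA d).IsHermitian := by
  have hd' : (star d : n → ℂ) = d := funext hd
  unfold sand Matrix.IsHermitian
  simp only [Matrix.star_eq_conjTranspose]
  rw [Matrix.conjTranspose_mul, Matrix.conjTranspose_mul, Matrix.diagonal_conjTranspose,
    Matrix.conjTranspose_conjTranspose, hd', Matrix.mul_assoc]

lemma sand_posSemidef {d : n → ℂ} (hd : ∀ i, 0 ≤ d i) : (sand hA d).PosSemidef := by
  unfold sand
  set V := (hA.eigenvectorUnitary : Matrix n n ℂ) with hV
  have hdiag : (Matrix.diagonal d).PosSemidef := Matrix.posSemidef_diagonal_iff.mpr hd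
  have := hdiag.mul_mul_conjTranspose_same V
  simpa [Matrix.star_eq_conjTranspose, Matrix.mul_assoc] using this

lemma sand_trace (d : n → ℂ) : (sand hA d).trace = ∑ i, d i := by
  unfold sand
  rw [Matrix.trace_mul_cycle, star_mul_V hA, Matrix.one_mul, Matrix.trace_diagonal]

lemma star_sand_V (d : n → ℂ) :
    (star hA.eigenvectorUnitary : Matrix n n ℂ) * sand hA d *
      (hA.eigenvectorUnitary : Matrix n n ℂ) = Matrix.diagonal d := by
  unfold sand
  set V := (hA.eigenvectorUnitary : Matrix n n ℂ) with hV
  simp only [Matrix.mul_assoc]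
  rw [← Matrix.mul_assoc (star V) V, star_mul_V hA, Matrix.one_mul, Matrix.mul_one]

lemma sand_inj {d e : n → ℂ} (h : sand hA d = sand hA e) : ∀ i, d i = e i := by
  intro i
  have h2 := congrArg (fun M => ((star hA.eigenvectorUnitary : Matrix n n ℂ) * M *
    (hA.eigenvectorUnitary : Matrix n n ℂ)) i i) h
  simpa [star_sand_V, Matrix.diagonal_apply_eq] using h2

lemma herCfc_congr {f g : ℝ → ℝ} (h : ∀ i, f (hA.eigenvalues i) = g (hA.eigenvalues i)) :
    herCfc hA f = herCfc hA g := by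
  rw [herCfc_eq_sand, herCfc_eq_sand]
  exact sand_congr hA (fun i => by rw [h i])

lemma herCfc_isHermitian (f : ℝ → ℝ) : (herCfc hA f).IsHermitian := by
  rw [herCfc_eq_sand]
  exact sand_isHermitian hA (fun i => by simp [Complex.star_def, Complex.conj_ofReal])

lemma herCfc_posSemidef {f : ℝ → ℝ} (hf : ∀ i, 0 ≤ f (hA.eigenvalues i)) :
    (herCfc hA f).PosSemidef := by
  rw [herCfc_eq_sand]
  exact sand_posSemidef hA (fun i => by exact_mod_cast hf i)

lemma herCfc_trace (f : ℝ → ℝ) :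
    (herCfc hA f).trace = ∑ i, (f (hA.eigenvalues i) : ℂ) := by
  rw [herCfc_eq_sand, sand_trace]

lemma eigenvalues_of_sq {c : ℝ} (hsq : A * A = (c : ℂ) • A) :
    ∀ i, hA.eigenvalues i = 0 ∨ hA.eigenvalues i = c := by
  intro i
  have h1 : sand hA (fun i => (hA.eigenvalues i : ℂ) * (hA.eigenvalues i : ℂ)) =
      sand hA (fun i => (c : ℂ) * (hA.eigenvalues i : ℂ)) := by
    rw [← sand_mul hA, sand_spectral hA, ← sand_smul hA, sand_spectral hA, hsq]
  have h2 := sand_inj hA h1 i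
  have h3 : (hA.eigenvalues i : ℂ) * ((hA.eigenvalues i : ℂ) - (c : ℂ)) = 0 := by
    ring_nf
    ring_nf at h2
    rw [h2]
    ring
  rcases mul_eq_zero.mp h3 with h | h
  · left; exact_mod_cast h
  · right
    have : (hA.eigenvalues i : ℂ) = (c : ℂ) := by linear_combination h
    exact_mod_cast this

lemma herCfc_of_sq {c : ℝ} (hc : c ≠ 0) (hsq : A * A = (c : ℂ) • A)
    {f : ℝ → ℝ} (hf0 : f 0 = 0) :
    herCfc hA f = ((f c / c : ℝ) : ℂ) • A := by
  rw [herCfc_eq_sand]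
  have h1 : sand hA (fun i => ((f (hA.eigenvalues i) : ℝ) : ℂ)) =
      sand hA (fun i => ((f c / c : ℝ) : ℂ) * (hA.eigenvalues i : ℂ)) := by
    apply sand_congr hA
    intro i
    rcases eigenvalues_of_sq hA hsq i with h | h
    · rw [h, hf0]; simp
    · rw [h]
      push_cast
      field_simp
  rw [h1, ← sand_smul hA, sand_spectral hA]


lemma re_real_mul (r : ℝ) (z : ℂ) : ((r : ℂ) * z).re = r * z.re := by
  simp [Complex.mul_re]

lemma psd_entry_nonneg {B : Matrix n n ℂ} (hB : B.PosSemidef) (a : n) : 0 ≤ (B a a).re := by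
  have h := hB.dotProduct_mulVec_nonneg (Pi.single a 1)
  have he : dotProduct (star (Pi.single a 1)) (B.mulVec (Pi.single a 1)) = B a a := by
    classical
    rw [show B.mulVec (Pi.single a 1) = fun x => B x a * 1 from
      funext fun x => by simp [Matrix.mulVec_single], dotProduct]
    have hterm : ∀ x : n, (star (Pi.single a 1 : n → ℂ)) x * (B x a * 1) = if x = a then B a a else 0 := by
      intro x
      by_cases hx : x = a <;> simp [hx, Pi.single_apply]
    rw [Finset.sum_congr rfl (fun x _ => hterm x), Finset.sum_ite_eq' Finset.univ a
      (fun _ => B a a)]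
    simp
  rw [he] at h
  exact (Complex.nonneg_iff.mp h).1

lemma psd_trace_re_nonneg {B : Matrix n n ℂ} (hB : B.PosSemidef) : 0 ≤ (B.trace).re := by
  rw [Matrix.trace]
  rw [Complex.re_sum]
  exact Finset.sum_nonneg fun a _ => psd_entry_nonneg hB a

open scoped MatrixOrder in
lemma trace_mul_psd_re_nonneg {B C : Matrix n n ℂ} (hB : B.PosSemidef) (hC : C.PosSemidef) :
    0 ≤ ((B * C).trace).re := by
  have hR := (CFC.sqrt_nonneg B).posSemidef
  have hRB : CFC.sqrt B * CFC.sqrt B = B := CFC.sqrt_mul_sqrt_self B hB.nonneg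
  have h1 : (CFC.sqrt B * C * CFC.sqrt B).trace = (B * C).trace := by
    rw [Matrix.trace_mul_comm, ← Matrix.mul_assoc, hRB]
  rw [← h1]
  have h2 : (CFC.sqrt B * C * CFC.sqrt B).PosSemidef := by
    have := hC.conjTranspose_mul_mul_same (CFC.sqrt B)
    rwa [hR.1] at this
  exact psd_trace_re_nonneg h2

lemma trace_mul_psd_le {W C : Matrix n n ℂ} {c : ℝ}
    (h1 : ((c : ℂ) • 1 - W).PosSemidef) (h2 : ((c : ℂ) • 1 + W).PosSemidef)
    (hC : C.PosSemidef) :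
    |((W * C).trace).re| ≤ c * (C.trace).re := by
  have e1 : (((c : ℂ) • 1 - W) * C).trace = (c : ℂ) * C.trace - (W * C).trace := by
    rw [Matrix.sub_mul, Matrix.smul_mul, Matrix.one_mul, Matrix.trace_sub, Matrix.trace_smul]
    rfl
  have e2 : (((c : ℂ) • 1 + W) * C).trace = (c : ℂ) * C.trace + (W * C).trace := by
    rw [Matrix.add_mul, Matrix.smul_mul, Matrix.one_mul, Matrix.trace_add, Matrix.trace_smul]
    rfl
  have g1 := trace_mul_psd_re_nonneg h1 hC
  have g2 := trace_mul_psd_re_nonneg h2 hC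
  rw [e1, Complex.sub_re, re_real_mul] at g1
  rw [e2, Complex.add_re, re_real_mul] at g2
  rw [abs_le]
  constructor <;> linarith

open scoped MatrixOrder in
lemma traceNorm_eq_of_sq {Y P : Matrix n n ℂ} (hP : P.PosSemidef) (h : P ^ 2 = Yᴴ * Y) :
    traceNorm Y = (P.trace).re := by
  have hB := Matrix.posSemidef_conjTranspose_mul_self Y
  have e1 : CFC.sqrt (Yᴴ * Y) = P := by
    rw [← h, pow_two]; exact CFC.sqrt_mul_self P hP.nonneg
  have e2 : CFC.sqrt (Yᴴ * Y) = hB.1.cfc Real.sqrt := by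
    rw [CFC.sqrt_eq_real_sqrt _ hB.nonneg, cfcₙ_eq_cfc (hf0 := Real.sqrt_zero), hB.1.cfc_eq]
  rw [← e1, e2, traceNorm, Matrix.IsHermitian.cfc, Unitary.conjStarAlgAut_apply]
  rfl

lemma traceNorm_eq_posNeg {Y : Matrix n n ℂ} (hY : Y.IsHermitian) :
    traceNorm Y = ((herCfc hY (fun x => max x 0)).trace).re +
      ((herCfc hY (fun x => max (-x) 0)).trace).re ∧
    (herCfc hY (fun x => max x 0)).PosSemidef ∧
    (herCfc hY (fun x => max (-x) 0)).PosSemidef ∧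
    herCfc hY (fun x => max x 0) - herCfc hY (fun x => max (-x) 0) = Y := by
  set Yp := herCfc hY (fun x => max x 0) with hYp
  set Ym := herCfc hY (fun x => max (-x) 0) with hYm
  have hpp : Yp.PosSemidef := herCfc_posSemidef hY (fun i => le_max_right _ _)
  have hmp : Ym.PosSemidef := herCfc_posSemidef hY (fun i => le_max_right _ _)
  have hsub : Yp - Ym = Y := by
    rw [hYp, hYm, herCfc_eq_sand, herCfc_eq_sand, sand_sub]
    have h2 := sand_congr hY (d := fun i => ((max (hY.eigenvalues i) 0 : ℝ) : ℂ) -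
        ((max (-(hY.eigenvalues i)) 0 : ℝ) : ℂ)) (e := fun i => ((hY.eigenvalues i : ℝ) : ℂ))
      (fun i => by
        rw [← Complex.ofReal_sub]
        norm_cast
        exact max_zero_sub_max_neg_zero_eq_self _)
    exact h2.trans (sand_spectral hY)
  have hsq : (Yp + Ym) ^ 2 = Yᴴ * Y := by
    rw [hY.eq]
    rw [hYp, hYm, herCfc_eq_sand, herCfc_eq_sand, sand_add, pow_two, sand_mul]
    have hYY : Y * Y = sand hY (fun i => (hY.eigenvalues i : ℂ) * (hY.eigenvalues i : ℂ)) := by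
      conv_lhs => rw [← sand_spectral hY]
      rw [sand_mul]
    rw [hYY]
    apply sand_congr
    intro i
    rw [← Complex.ofReal_add, ← Complex.ofReal_mul, ← Complex.ofReal_mul]
    congr 1
    have h3 := max_zero_add_max_neg_zero_eq_abs_self (hY.eigenvalues i)
    rw [h3, abs_mul_abs_self]
  refine ⟨?_, hpp, hmp, hsub⟩
  rw [traceNorm_eq_of_sq (hpp.add hmp) hsq, Matrix.trace_add, Complex.add_re]

lemma trace_pairing_le {W Y : Matrix n n ℂ} (hY : Y.IsHermitian) {c : ℝ}
    (h1 : ((c : ℂ) • 1 - W).PosSemidef) (h2 : ((c : ℂ) • 1 + W).PosSemidef) :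
    ((W * Y).trace).re ≤ c * traceNorm Y := by
  obtain ⟨htn, hpp, hmp, hsub⟩ := traceNorm_eq_posNeg hY
  set Yp := herCfc hY (fun x => max x 0)
  set Ym := herCfc hY (fun x => max (-x) 0)
  have e1 : (W * Y).trace = (W * Yp).trace - (W * Ym).trace := by
    rw [← hsub, Matrix.mul_sub, Matrix.trace_sub]
  have b1 := trace_mul_psd_le h1 h2 hpp
  have b2 := trace_mul_psd_le h1 h2 hmp
  rw [abs_le] at b1 b2
  rw [e1, Complex.sub_re, htn]
  nlinarith [b1.2, b2.1]

lemma col_quad (M U : Matrix n n ℂ) (i : n) :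
    dotProduct (star (fun a => U a i)) (M *ᵥ (fun a => U a i))
      = (star U * M * U) i i := by
  simp only [Matrix.mul_apply, Matrix.mulVec, dotProduct, Pi.star_apply,
    Matrix.star_apply, Finset.sum_mul, Finset.mul_sum]
  rw [Finset.sum_comm]
  apply Finset.sum_congr rfl
  intro a _
  apply Finset.sum_congr rfl
  intro b _
  ring

lemma eig_sq_le {W : Matrix n n ℂ} (hW : W.IsHermitian) {c : ℝ}
    (h : ∀ v : n → ℂ, (dotProduct (star v) ((W * W) *ᵥ v)).re
      ≤ c ^ 2 * (dotProduct (star v) v).re) :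
    ∀ i, (hW.eigenvalues i) ^ 2 ≤ c ^ 2 := by
  intro i
  set V := (hW.eigenvectorUnitary : Matrix n n ℂ) with hV
  have hWW : W * W = sand hW (fun j => (hW.eigenvalues j : ℂ) * (hW.eigenvalues j : ℂ)) := by
    conv_lhs => rw [← sand_spectral hW]
    rw [sand_mul]
  have key := h (fun a => V a i)
  have e1 : dotProduct (star (fun a => V a i)) ((W * W) *ᵥ (fun a => V a i))
      = ((hW.eigenvalues i : ℂ) * (hW.eigenvalues i : ℂ)) := by
    rw [col_quad, hWW, star_sand_V hW, Matrix.diagonal_apply_eq]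
  have e2 : dotProduct (star (fun a => V a i)) (fun a => V a i) = 1 := by
    have := col_quad 1 V i
    rw [Matrix.mul_one, star_mul_V hW] at this
    simpa [Matrix.one_mulVec] using this
  rw [e1, e2] at key
  have : ((hW.eigenvalues i : ℂ) * (hW.eigenvalues i : ℂ)).re = hW.eigenvalues i ^ 2 := by
    rw [← Complex.ofReal_mul, Complex.ofReal_re, pow_two]
  rw [this] at key
  simpa using key

lemma smul_one_pm_posSemidef {W : Matrix n n ℂ} (hW : W.IsHermitian) {c : ℝ} (hc : 0 ≤ c)
    (hquad : ∀ i, (hW.eigenvalues i) ^ 2 ≤ c ^ 2) :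
    ((c : ℂ) • 1 - W).PosSemidef ∧ ((c : ℂ) • 1 + W).PosSemidef := by
  have habs : ∀ i, -c ≤ hW.eigenvalues i ∧ hW.eigenvalues i ≤ c := by
    intro i
    have := hquad i
    constructor <;> nlinarith
  have e1 : (c : ℂ) • (1 : Matrix n n ℂ) - W =
      sand hW (fun i => (c : ℂ) - (hW.eigenvalues i : ℂ)) := by
    have h := sand_sub hW (fun _ => (c : ℂ)) (fun i => (hW.eigenvalues i : ℂ))
    rw [sand_const, sand_spectral] at h
    exact h
  have e2 : (c : ℂ) • (1 : Matrix n n ℂ) + W =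
      sand hW (fun i => (c : ℂ) + (hW.eigenvalues i : ℂ)) := by
    have h := sand_add hW (fun _ => (c : ℂ)) (fun i => (hW.eigenvalues i : ℂ))
    rw [sand_const, sand_spectral] at h
    exact h
  constructor
  · rw [e1]
    apply sand_posSemidef
    intro i
    rw [← Complex.ofReal_sub, Complex.zero_le_real]
    linarith [(habs i).2]
  · rw [e2]
    apply sand_posSemidef
    intro i
    rw [← Complex.ofReal_add, Complex.zero_le_real]
    linarith [(habs i).1]

lemma psd_smul {A : Matrix n n ℂ} (hA : A.PosSemidef) {r : ℝ} (hr : 0 ≤ r) :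
    (((r : ℝ) : ℂ) • A).PosSemidef := by
  apply Matrix.PosSemidef.of_dotProduct_mulVec_nonneg
  · unfold Matrix.IsHermitian
    rw [Matrix.conjTranspose_smul, hA.1.eq]
    congr 1
    rw [Complex.star_def, Complex.conj_ofReal]
  · intro v
    rw [Matrix.smul_mulVec, dotProduct_smul, smul_eq_mul]
    exact mul_nonneg (Complex.zero_le_real.mpr hr) (hA.dotProduct_mulVec_nonneg v)

lemma herm_smul {A : Matrix n n ℂ} (hA : A.IsHermitian) (r : ℝ) :
    (((r : ℝ) : ℂ) • A).IsHermitian := by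
  unfold Matrix.IsHermitian
  rw [Matrix.conjTranspose_smul, hA.eq]
  congr 1
  rw [Complex.star_def, Complex.conj_ofReal]

lemma jensen_logb {ι : Type*} [Fintype ι] (p lam : ι → ℝ) (hp : ∀ i, 0 ≤ p i)
    (hlam : ∀ i, 0 ≤ lam i) (hsum : ∑ i, p i = 1) (hsupp : ∀ i, lam i = 0 → p i = 0)
    {m : ℝ} (hm : ∑ i, p i * lam i = m) (hmpos : 0 < m) :
    ∑ i, p i * (if lam i ≤ 0 then 0 else Real.logb 2 (lam i)) ≤ Real.logb 2 m := by
  have hterm : ∀ i, p i * (if lam i ≤ 0 then 0 else Real.logb 2 (lam i))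
      ≤ p i * Real.logb 2 m + (p i * lam i / m - p i) / Real.log 2 := by
    intro i
    by_cases hli : lam i ≤ 0
    · have hl0 : lam i = 0 := le_antisymm hli (hlam i)
      rw [if_pos hli, hsupp i hl0]
      simp
    · push_neg at hli
      rw [if_neg (not_le.mpr hli)]
      have hlog : Real.log (lam i / m) ≤ lam i / m - 1 :=
        Real.log_le_sub_one_of_pos (by positivity)
      have hlog2 : (0 : ℝ) < Real.log 2 := Real.log_pos one_lt_two
      have hld := Real.log_div (ne_of_gt hli) (ne_of_gt hmpos)
      have h4 : Real.log (lam i) ≤ Real.log m + (lam i / m - 1) := by linarith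
      have hlb : Real.logb 2 (lam i) ≤ Real.logb 2 m + (lam i / m - 1) / Real.log 2 := by
        rw [Real.logb, Real.logb, ← add_div]
        exact (div_le_div_iff_of_pos_right hlog2).mpr h4
      have h2 : p i * Real.logb 2 (lam i)
          ≤ p i * (Real.logb 2 m + (lam i / m - 1) / Real.log 2) :=
        mul_le_mul_of_nonneg_left hlb (hp i)
      have h3 : p i * (Real.logb 2 m + (lam i / m - 1) / Real.log 2)
          = p i * Real.logb 2 m + (p i * lam i / m - p i) / Real.log 2 := by
        field_simp
      linarith
  calc ∑ i, p i * (if lam i ≤ 0 then 0 else Real.logb 2 (lam i))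
      ≤ ∑ i, (p i * Real.logb 2 m + (p i * lam i / m - p i) / Real.log 2) :=
        Finset.sum_le_sum (fun i _ => hterm i)
    _ = Real.logb 2 m := by
        rw [Finset.sum_add_distrib, ← Finset.sum_mul, hsum, one_mul]
        have : ∑ i, (p i * lam i / m - p i) / Real.log 2
            = ((∑ i, p i * lam i) / m - ∑ i, p i) / Real.log 2 := by
          rw [← Finset.sum_div, Finset.sum_sub_distrib, ← Finset.sum_div]
        rw [this, hm, hsum, div_self (ne_of_gt hmpos), sub_self, zero_div, add_zero]

lemma traceNorm_zero : traceNorm (0 : Matrix n n ℂ) = 0 := by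
  have h0 : (0 : Matrix n n ℂ).PosSemidef := Matrix.PosSemidef.zero
  rw [traceNorm_eq_of_sq h0 (by simp)]
  simp

end Aux

namespace AuxPT

open Matrix

variable {k : ℕ} {d : Fin k → ℕ}

lemma pt_zero (S : Finset (Fin k)) : partialTranspose S (0 : Matrix (PIdx k d) (PIdx k d) ℂ) = 0 := by
  ext a b
  rfl

lemma pt_smul (S : Finset (Fin k)) (c : ℂ) (A : Matrix (PIdx k d) (PIdx k d) ℂ) :
    partialTranspose S (c • A) = c • partialTranspose S A := by
  ext a b
  rfl

lemma pt_isHermitian (S : Finset (Fin k)) {A : Matrix (PIdx k d) (PIdx k d) ℂ}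
    (hA : A.IsHermitian) : (partialTranspose S A).IsHermitian := by
  unfold Matrix.IsHermitian
  ext a b
  simp only [Matrix.conjTranspose_apply, partialTranspose, Matrix.of_apply]
  rw [← Matrix.conjTranspose_apply, hA.eq]

lemma trace_mul_eq (A B : Matrix (PIdx k d) (PIdx k d) ℂ) :
    (A * B).trace = ∑ p : PIdx k d × PIdx k d, A p.1 p.2 * B p.2 p.1 := by
  rw [Matrix.trace, Fintype.sum_prod_type]
  apply Finset.sum_congr rfl
  intro a _
  rw [Matrix.diag_apply, Matrix.mul_apply]

lemma trace_pt_mul_pt (S : Finset (Fin k)) (A B : Matrix (PIdx k d) (PIdx k d) ℂ) :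
    (partialTranspose S A * partialTranspose S B).trace = (A * B).trace := by
  rw [trace_mul_eq, trace_mul_eq]
  have hinv : Function.Involutive (fun p : PIdx k d × PIdx k d =>
      ((fun j => if j ∈ S then p.2 j else p.1 j, fun j => if j ∈ S then p.1 j else p.2 j) :
        PIdx k d × PIdx k d)) := by
    intro p
    refine Prod.ext ?_ ?_ <;> funext j <;> by_cases hj : j ∈ S <;> simp [hj]
  exact Fintype.sum_bijective _ hinv.bijective _ _ (fun p => rfl)

end AuxPT


end


noncomputable section

namespace AuxGHZ

open Matrix Classical

variable {k dd : ℕ}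

/-- Indicator of constant tuples. -/
noncomputable def phi (k dd : ℕ) : (PIdx k fun _ => dd) → ℂ := fun a =>
  if ∃ i, ∀ l, a l = i then 1 else 0

lemma phi_star (a : PIdx k fun _ => dd) : star (phi k dd a) = phi k dd a := by
  unfold phi
  by_cases h : ∃ i, ∀ l, a l = i <;> simp [h]

lemma phi_mul_self (a : PIdx k fun _ => dd) : phi k dd a * phi k dd a = phi k dd a := by
  unfold phi
  by_cases h : ∃ i, ∀ l, a l = i <;> simp [h]

lemma phi_ne_zero {a : PIdx k fun _ => dd} (h : phi k dd a ≠ 0) : ∃ i, ∀ l, a l = i := by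
  by_contra hcon
  exact h (by unfold phi; rw [if_neg hcon])

lemma phi_eq_one {a : PIdx k fun _ => dd} (h : ∃ i, ∀ l, a l = i) : phi k dd a = 1 := by
  unfold phi
  rw [if_pos h]

lemma phi_const (i : Fin dd) : phi k dd (fun _ => i) = 1 :=
  phi_eq_one ⟨i, fun _ => rfl⟩

lemma GHZ_apply (hk : 0 < k) (a b : PIdx k fun _ => dd) :
    GHZ k dd a b = (dd : ℂ)⁻¹ * (phi k dd a * phi k dd b) := by
  unfold GHZ
  simp only [Matrix.smul_apply, Matrix.sum_apply, Matrix.of_apply, smul_eq_mul]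
  congr 1
  by_cases ha : ∃ i, ∀ l, a l = i
  · obtain ⟨i₀, hi₀⟩ := ha
    by_cases hb : ∃ j, ∀ l, b l = j
    · obtain ⟨j₀, hj₀⟩ := hb
      rw [phi_eq_one ⟨i₀, hi₀⟩, phi_eq_one ⟨j₀, hj₀⟩]
      rw [Finset.sum_eq_single i₀]
      · rw [Finset.sum_eq_single j₀]
        · rw [if_pos ⟨hi₀, hj₀⟩, mul_one]
        · intro j _ hj
          rw [if_neg]
          rintro ⟨-, h2⟩
          exact hj (by rw [← h2 ⟨0, hk⟩, hj₀ ⟨0, hk⟩])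
        · intro h; exact absurd (Finset.mem_univ _) h
      · intro i _ hi
        apply Finset.sum_eq_zero
        intro j _
        rw [if_neg]
        rintro ⟨h1, -⟩
        exact hi (by rw [← h1 ⟨0, hk⟩, hi₀ ⟨0, hk⟩])
      · intro h; exact absurd (Finset.mem_univ _) h
    · have : phi k dd b = 0 := by unfold phi; rw [if_neg hb]
      rw [this, mul_zero]
      apply Finset.sum_eq_zero; intro i _
      apply Finset.sum_eq_zero; intro j _
      rw [if_neg]
      rintro ⟨-, h2⟩
      exact hb ⟨j, h2⟩
  · have : phi k dd a = 0 := by unfold phi; rw [if_neg ha]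
    rw [this, zero_mul]
    apply Finset.sum_eq_zero; intro i _
    apply Finset.sum_eq_zero; intro j _
    rw [if_neg]
    rintro ⟨h1, -⟩
    exact ha ⟨i, h1⟩

lemma sum_forall_one (i : Fin dd) :
    (∑ a : PIdx k fun _ => dd, if (∀ l, a l = i) then (1 : ℂ) else 0) = 1 := by
  have h : ∀ a : PIdx k fun _ => dd, (if (∀ l, a l = i) then (1 : ℂ) else 0)
      = if a = (fun _ => i) then (1 : ℂ) else 0 := by
    intro a
    by_cases h : ∀ l, a l = i
    · rw [if_pos h, if_pos (funext h)]
    · rw [if_neg h, if_neg (fun he => h (fun l => congrFun he l))]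
  rw [Finset.sum_congr rfl (fun a _ => h a)]
  rw [Fintype.sum_ite_eq' (fun _ => i : PIdx k fun _ => dd) (fun _ => (1 : ℂ))]

lemma phi_sum_eq (hk : 0 < k) (a : PIdx k fun _ => dd) :
    phi k dd a = ∑ i : Fin dd, if (∀ l, a l = i) then (1 : ℂ) else 0 := by
  by_cases h : ∃ i, ∀ l, a l = i
  · obtain ⟨i₀, hi₀⟩ := h
    rw [phi_eq_one ⟨i₀, hi₀⟩, Finset.sum_eq_single i₀]
    · rw [if_pos hi₀]
    · intro j _ hj
      rw [if_neg]
      intro hcon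
      exact hj (by rw [← hcon ⟨0, hk⟩, hi₀ ⟨0, hk⟩])
    · intro h; exact absurd (Finset.mem_univ _) h
  · rw [show phi k dd a = 0 from by unfold phi; rw [if_neg h]]
    symm
    apply Finset.sum_eq_zero
    intro i _
    rw [if_neg (fun hcon => h ⟨i, hcon⟩)]

lemma sum_phi (hk : 0 < k) : ∑ a : PIdx k fun _ => dd, phi k dd a = (dd : ℂ) := by
  rw [Finset.sum_congr rfl (fun a _ => phi_sum_eq hk a), Finset.sum_comm,
    Finset.sum_congr rfl (fun i _ => sum_forall_one i)]
  simp

lemma GHZ_trace (hk : 0 < k) (hd : 0 < dd) : (GHZ k dd).trace = 1 := by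
  rw [Matrix.trace]
  have h1 : ∀ a : PIdx k fun _ => dd, (GHZ k dd).diag a = (dd : ℂ)⁻¹ * phi k dd a := by
    intro a
    rw [Matrix.diag_apply, GHZ_apply hk, phi_mul_self]
  rw [Finset.sum_congr rfl (fun a _ => h1 a), ← Finset.mul_sum, sum_phi hk]
  have : (dd : ℂ) ≠ 0 := Nat.cast_ne_zero.mpr hd.ne'
  field_simp

lemma GHZ_isHermitian (hk : 0 < k) : (GHZ k dd).IsHermitian := by
  unfold Matrix.IsHermitian
  ext a b
  rw [Matrix.conjTranspose_apply, GHZ_apply hk, GHZ_apply hk]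
  rw [star_mul', star_mul', phi_star, phi_star]
  have : star ((dd : ℂ)⁻¹) = (dd : ℂ)⁻¹ := by
    rw [← Complex.ofReal_natCast, ← Complex.ofReal_inv, Complex.star_def, Complex.conj_ofReal]
  rw [this]
  ring

lemma GHZ_mulVec (hk : 0 < k) (v : PIdx k (fun _ => dd) → ℂ) (a : PIdx k fun _ => dd) :
    (GHZ k dd).mulVec v a = (dd : ℂ)⁻¹ * phi k dd a * (∑ b, phi k dd b * v b) := by
  rw [Matrix.mulVec, dotProduct, Finset.mul_sum]
  apply Finset.sum_congr rfl
  intro b _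
  rw [GHZ_apply hk]
  ring

lemma GHZ_posSemidef (hk : 0 < k) : (GHZ k dd).PosSemidef := by
  refine Matrix.PosSemidef.of_dotProduct_mulVec_nonneg (GHZ_isHermitian hk) ?_
  intro v
  have h1 : dotProduct (star v) ((GHZ k dd).mulVec v) =
      (dd : ℂ)⁻¹ * (star (∑ b, phi k dd b * v b) * (∑ b, phi k dd b * v b)) := by
    rw [dotProduct]
    have h2 : ∀ a, star v a * (GHZ k dd).mulVec v a =
        (dd : ℂ)⁻¹ * ((phi k dd a * star (v a)) * (∑ b, phi k dd b * v b)) := by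
      intro a
      rw [GHZ_mulVec hk]
      simp only [Pi.star_apply]
      ring
    rw [Finset.sum_congr rfl (fun a _ => h2 a), ← Finset.mul_sum, ← Finset.sum_mul]
    congr 2
    rw [star_sum]
    apply Finset.sum_congr rfl
    intro b _
    rw [star_mul', phi_star]
  rw [h1]
  set z := ∑ b, phi k dd b * v b
  have hz : star z * z = (Complex.normSq z : ℂ) := Complex.normSq_eq_conj_mul_self.symm
  rw [hz, ← Complex.ofReal_natCast, ← Complex.ofReal_inv, ← Complex.ofReal_mul,
    Complex.zero_le_real]
  exact mul_nonneg (by positivity) (Complex.normSq_nonneg z)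

lemma GHZ_sq (hk : 0 < k) (hd : 0 < dd) : GHZ k dd * GHZ k dd = GHZ k dd := by
  have hdd : (dd : ℂ) ≠ 0 := Nat.cast_ne_zero.mpr hd.ne'
  ext a b
  rw [Matrix.mul_apply]
  have h1 : ∀ c, GHZ k dd a c * GHZ k dd c b =
      ((dd : ℂ)⁻¹ * (dd : ℂ)⁻¹ * (phi k dd a * phi k dd b)) * phi k dd c := by
    intro c
    rw [GHZ_apply hk, GHZ_apply hk,
      show (dd : ℂ)⁻¹ * (phi k dd a * phi k dd c) * ((dd : ℂ)⁻¹ * (phi k dd c * phi k dd b)) =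
        ((dd : ℂ)⁻¹ * (dd : ℂ)⁻¹ * (phi k dd a * phi k dd b)) * (phi k dd c * phi k dd c) from
        by ring, phi_mul_self]
  rw [Finset.sum_congr rfl (fun c _ => h1 c), ← Finset.mul_sum, sum_phi hk, GHZ_apply hk]
  field_simp

lemma GHZ_trace_mul (hk : 0 < k) (M : Matrix (PIdx k fun _ => dd) (PIdx k fun _ => dd) ℂ) :
    (GHZ k dd * M).trace = (dd : ℂ)⁻¹ * ∑ a, ∑ b, phi k dd a * phi k dd b * M b a := by
  rw [Matrix.trace]
  have h1 : ∀ a, (GHZ k dd * M).diag a = (dd : ℂ)⁻¹ * ∑ b, phi k dd a * phi k dd b * M b a := by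
    intro a
    rw [Matrix.diag_apply, Matrix.mul_apply, Finset.mul_sum]
    apply Finset.sum_congr rfl
    intro b _
    rw [GHZ_apply hk]
    ring
  rw [Finset.sum_congr rfl (fun a _ => h1 a), ← Finset.mul_sum]

/-- The predicate: constant on `S` and constant on the complement of `S`. -/
def cS (S : Finset (Fin k)) (a : PIdx k fun _ => dd) : Prop :=
  (∃ i, ∀ l ∈ S, a l = i) ∧ (∃ j, ∀ l ∉ S, a l = j)

/-- Diagonal projection matrix onto tuples that are `S`-biconstant. -/
noncomputable def Qmat (S : Finset (Fin k)) :
    Matrix (PIdx k fun _ => dd) (PIdx k fun _ => dd) ℂ :=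
  Matrix.of fun a b => if a = b ∧ cS S a then 1 else 0

lemma bipart_witness (hk : 0 < k) {S : Finset (Fin k)} (hS : S ∈ Bipartitions k) :
    (∃ s, s ∈ S) ∧ (⟨0, hk⟩ : Fin k) ∉ S := by
  rw [Bipartitions, Finset.mem_filter] at hS
  obtain ⟨-, ⟨s, hs⟩, hzero⟩ := hS
  exact ⟨⟨s, hs⟩, fun hmem => hzero _ hmem rfl⟩

lemma ptGHZ_apply (hk : 0 < k) (S : Finset (Fin k)) (a b : PIdx k fun _ => dd) :
    partialTranspose S (GHZ k dd) a b = (dd : ℂ)⁻¹ *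
      (phi k dd (fun j => if j ∈ S then b j else a j) *
        phi k dd (fun j => if j ∈ S then a j else b j)) := by
  simp only [partialTranspose, Matrix.of_apply]
  rw [GHZ_apply hk]

lemma ptGHZ_isHermitian (hk : 0 < k) (S : Finset (Fin k)) :
    (partialTranspose S (GHZ k dd)).IsHermitian :=
  AuxPT.pt_isHermitian S (GHZ_isHermitian hk)

lemma ptGHZ_sq (hk : 0 < k) {S : Finset (Fin k)} (hS : S ∈ Bipartitions k) :
    partialTranspose S (GHZ k dd) * partialTranspose S (GHZ k dd)
      = ((((dd : ℝ)⁻¹) ^ 2 : ℝ) : ℂ) • Qmat S := by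
  obtain ⟨⟨s₀, hs₀⟩, ht₀⟩ := bipart_witness hk hS
  set t₀ : Fin k := ⟨0, hk⟩
  ext a b
  rw [Matrix.mul_apply]
  have h1 : ∀ c, partialTranspose S (GHZ k dd) a c * partialTranspose S (GHZ k dd) c b =
      ((dd : ℂ)⁻¹ * (dd : ℂ)⁻¹) *
        (phi k dd (fun j => if j ∈ S then c j else a j) *
          (phi k dd (fun j => if j ∈ S then a j else c j) *
            (phi k dd (fun j => if j ∈ S then b j else c j) *
              phi k dd (fun j => if j ∈ S then c j else b j)))) := by
    intro c
    rw [ptGHZ_apply hk, ptGHZ_apply hk]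
    ring
  rw [Finset.sum_congr rfl (fun c _ => h1 c), ← Finset.mul_sum]
  set c₀ : PIdx k fun _ => dd := fun l => if l ∈ S then a t₀ else a s₀ with hc₀
  -- the forward implication
  have fwd : ∀ c : PIdx k fun _ => dd,
      (∃ i, ∀ l, (if l ∈ S then c l else a l) = i) →
      (∃ i, ∀ l, (if l ∈ S then a l else c l) = i) →
      (∃ i, ∀ l, (if l ∈ S then b l else c l) = i) →
      (∃ i, ∀ l, (if l ∈ S then c l else b l) = i) →
      c = c₀ ∧ a = b ∧ cS S a := by
    intro c ⟨i, hi⟩ ⟨j, hj⟩ ⟨i', hi'⟩ ⟨j', hj'⟩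
    have hcS : ∀ l ∈ S, c l = i := fun l hl => by have := hi l; rwa [if_pos hl] at this
    have haSc : ∀ l ∉ S, a l = i := fun l hl => by have := hi l; rwa [if_neg hl] at this
    have haS : ∀ l ∈ S, a l = j := fun l hl => by have := hj l; rwa [if_pos hl] at this
    have hcSc : ∀ l ∉ S, c l = j := fun l hl => by have := hj l; rwa [if_neg hl] at this
    have hbS : ∀ l ∈ S, b l = i' := fun l hl => by have := hi' l; rwa [if_pos hl] at this
    have hcSc' : ∀ l ∉ S, c l = i' := fun l hl => by have := hi' l; rwa [if_neg hl] at this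
    have hcS' : ∀ l ∈ S, c l = j' := fun l hl => by have := hj' l; rwa [if_pos hl] at this
    have hbSc : ∀ l ∉ S, b l = j' := fun l hl => by have := hj' l; rwa [if_neg hl] at this
    have hij : i' = j := by rw [← hcSc t₀ ht₀, hcSc' t₀ ht₀]
    have hji : j' = i := by rw [← hcS s₀ hs₀, hcS' s₀ hs₀]
    refine ⟨?_, ?_, ⟨j, haS⟩, ⟨i, haSc⟩⟩
    · funext l
      by_cases hl : l ∈ S
      · rw [hcS l hl, hc₀]
        simp only [if_pos hl]
        rw [haSc t₀ ht₀]
      · rw [hcSc l hl, hc₀]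
        simp only [if_neg hl]
        rw [haS s₀ hs₀]
    · funext l
      by_cases hl : l ∈ S
      · rw [haS l hl, hbS l hl, hij]
      · rw [haSc l hl, hbSc l hl, hji]
  -- the backward implication: at c₀ with a = b and cS S a, all four hold
  have bwd : a = b → cS S a →
      (∃ i, ∀ l, (if l ∈ S then c₀ l else a l) = i) ∧
      (∃ i, ∀ l, (if l ∈ S then a l else c₀ l) = i) ∧
      (∃ i, ∀ l, (if l ∈ S then b l else c₀ l) = i) ∧
      (∃ i, ∀ l, (if l ∈ S then c₀ l else b l) = i) := by
    rintro rfl ⟨⟨i, hiS⟩, ⟨j, hjS⟩⟩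
    have h₁ : ∀ l, (if l ∈ S then c₀ l else a l) = a t₀ := by
      intro l
      by_cases hl : l ∈ S
      · rw [if_pos hl, hc₀]; simp only [if_pos hl]
      · rw [if_neg hl, hjS l hl, hjS t₀ ht₀]
    have h₂ : ∀ l, (if l ∈ S then a l else c₀ l) = a s₀ := by
      intro l
      by_cases hl : l ∈ S
      · rw [if_pos hl, hiS l hl, hiS s₀ hs₀]
      · rw [if_neg hl, hc₀]; simp only [if_neg hl]
    exact ⟨⟨a t₀, h₁⟩, ⟨a s₀, h₂⟩, ⟨a s₀, h₂⟩, ⟨a t₀, h₁⟩⟩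
  have hsum : (∑ c : PIdx k fun _ => dd,
      (phi k dd (fun j => if j ∈ S then c j else a j) *
        (phi k dd (fun j => if j ∈ S then a j else c j) *
          (phi k dd (fun j => if j ∈ S then b j else c j) *
            phi k dd (fun j => if j ∈ S then c j else b j)))))
      = if a = b ∧ cS S a then 1 else 0 := by
    by_cases hX : a = b ∧ cS S a
    · rw [if_pos hX]
      obtain ⟨hh₁, hh₂, hh₃, hh₄⟩ := bwd hX.1 hX.2
      rw [Finset.sum_eq_single c₀]
      · rw [phi_eq_one hh₁, phi_eq_one hh₂, phi_eq_one hh₃, phi_eq_one hh₄]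
        norm_num
      · intro c _ hne
        by_contra h0
        have p1 := phi_ne_zero (left_ne_zero_of_mul h0)
        have h0' := right_ne_zero_of_mul h0
        have p2 := phi_ne_zero (left_ne_zero_of_mul h0')
        have h0'' := right_ne_zero_of_mul h0'
        have p3 := phi_ne_zero (left_ne_zero_of_mul h0'')
        have p4 := phi_ne_zero (right_ne_zero_of_mul h0'')
        exact hne (fwd c p1 p2 p3 p4).1
      · intro h; exact absurd (Finset.mem_univ _) h
    · rw [if_neg hX]
      apply Finset.sum_eq_zero
      intro c _
      by_contra h0
      have p1 := phi_ne_zero (left_ne_zero_of_mul h0)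
      have h0' := right_ne_zero_of_mul h0
      have p2 := phi_ne_zero (left_ne_zero_of_mul h0')
      have h0'' := right_ne_zero_of_mul h0'
      have p3 := phi_ne_zero (left_ne_zero_of_mul h0'')
      have p4 := phi_ne_zero (right_ne_zero_of_mul h0'')
      exact hX ⟨(fwd c p1 p2 p3 p4).2.1, (fwd c p1 p2 p3 p4).2.2⟩
  rw [hsum]
  simp only [Matrix.smul_apply, Qmat, Matrix.of_apply, smul_eq_mul]
  push_cast
  ring

lemma Qmat_apply (S : Finset (Fin k)) (a b : PIdx k fun _ => dd) :
    Qmat S a b = if a = b ∧ cS S a then 1 else 0 := rfl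

lemma Qmat_mulVec (S : Finset (Fin k)) (v : PIdx k (fun _ => dd) → ℂ)
    (a : PIdx k fun _ => dd) :
    (Qmat S).mulVec v a = if cS S a then v a else 0 := by
  rw [Matrix.mulVec, dotProduct]
  by_cases hc : cS S a
  · rw [if_pos hc]
    rw [Finset.sum_eq_single a]
    · rw [Qmat_apply, if_pos ⟨rfl, hc⟩, one_mul]
    · intro b _ hb
      rw [Qmat_apply, if_neg (fun h => hb h.1.symm), zero_mul]
    · intro h; exact absurd (Finset.mem_univ _) h
  · rw [if_neg hc]
    apply Finset.sum_eq_zero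
    intro b _
    rw [Qmat_apply, if_neg (fun h => hc h.2), zero_mul]

lemma Qmat_quadform (S : Finset (Fin k)) (v : PIdx k (fun _ => dd) → ℂ) :
    (dotProduct (star v) ((Qmat S).mulVec v)).re
      ≤ (dotProduct (star v) v).re := by
  rw [dotProduct, dotProduct, Complex.re_sum, Complex.re_sum]
  apply Finset.sum_le_sum
  intro a _
  rw [Qmat_mulVec]
  by_cases hc : cS S a
  · rw [if_pos hc]
  · rw [if_neg hc, mul_zero]
    simp only [Pi.star_apply, Complex.zero_re]
    rw [Complex.star_def]
    rw [← Complex.normSq_eq_conj_mul_self, Complex.ofReal_re]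
    exact Complex.normSq_nonneg _


lemma Qmat_sq (S : Finset (Fin k)) : Qmat S * Qmat S = (Qmat S : Matrix (PIdx k fun _ => dd) _ ℂ) := by
  ext a b
  rw [Matrix.mul_apply, Finset.sum_eq_single a]
  · by_cases hc : cS S a
    · rw [Qmat_apply S a a, if_pos ⟨rfl, hc⟩, one_mul]
    · rw [Qmat_apply S a a, if_neg (fun h => hc h.2), zero_mul,
        Qmat_apply, if_neg (fun h => hc h.2)]
  · intro e _ he
    rw [Qmat_apply, if_neg (fun h => he h.1.symm), zero_mul]
  · intro h; exact absurd (Finset.mem_univ _) h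

lemma Qmat_isHermitian (S : Finset (Fin k)) :
    (Qmat S : Matrix (PIdx k fun _ => dd) _ ℂ).IsHermitian := by
  unfold Matrix.IsHermitian
  ext a b
  rw [Matrix.conjTranspose_apply, Qmat_apply, Qmat_apply]
  by_cases hab : a = b
  · subst hab
    by_cases hc : cS S a <;> simp [hc]
  · rw [if_neg (fun h => hab h.1.symm), if_neg (fun h => hab h.1), star_zero]

lemma Qmat_posSemidef (S : Finset (Fin k)) :
    (Qmat S : Matrix (PIdx k fun _ => dd) _ ℂ).PosSemidef := by
  refine Matrix.PosSemidef.of_dotProduct_mulVec_nonneg (Qmat_isHermitian S) ?_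
  intro v
  have h1 : ∀ a, star v a * (Qmat S).mulVec v a
      = ((if cS S a then Complex.normSq (v a) else 0 : ℝ) : ℂ) := by
    intro a
    rw [Qmat_mulVec]
    by_cases hc : cS S a
    · rw [if_pos hc, if_pos hc]
      simp only [Pi.star_apply]
      rw [Complex.star_def, ← Complex.normSq_eq_conj_mul_self]
    · rw [if_neg hc, if_neg hc, mul_zero, Complex.ofReal_zero]
  rw [dotProduct, Finset.sum_congr rfl (fun a _ => h1 a), ← Complex.ofReal_sum,
    Complex.zero_le_real]
  apply Finset.sum_nonneg
  intro a _
  by_cases hc : cS S a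
  · rw [if_pos hc]; exact Complex.normSq_nonneg _
  · rw [if_neg hc]

lemma trace_Qmat (hk : 0 < k) {S : Finset (Fin k)} (hS : S ∈ Bipartitions k) :
    (Qmat S : Matrix (PIdx k fun _ => dd) _ ℂ).trace = (dd : ℂ) * dd := by
  obtain ⟨⟨s₀, hs₀⟩, ht₀⟩ := bipart_witness hk hS
  set t₀ : Fin k := ⟨0, hk⟩
  set w : Fin dd → Fin dd → (PIdx k fun _ => dd) :=
    fun i j => (fun l => if l ∈ S then i else j) with hw
  have h0 : ∀ a : PIdx k fun _ => dd, (Qmat S : Matrix _ _ ℂ).diag a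
      = if cS S a then 1 else 0 := by
    intro a
    rw [Matrix.diag_apply, Qmat_apply]
    by_cases hc : cS S a
    · rw [if_pos ⟨rfl, hc⟩, if_pos hc]
    · rw [if_neg (fun h => hc h.2), if_neg hc]
  have h1 : ∀ a : PIdx k fun _ => dd, (if cS S a then (1 : ℂ) else 0)
      = ∑ i : Fin dd, ∑ j : Fin dd, if a = w i j then 1 else 0 := by
    intro a
    by_cases hc : cS S a
    · obtain ⟨⟨i₀, hi⟩, ⟨j₀, hj⟩⟩ := hc
      rw [if_pos ⟨⟨i₀, hi⟩, ⟨j₀, hj⟩⟩]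
      rw [Finset.sum_eq_single i₀]
      · rw [Finset.sum_eq_single j₀]
        · rw [if_pos]
          funext l
          by_cases hl : l ∈ S
          · rw [hi l hl, hw]; simp only [if_pos hl]
          · rw [hj l hl, hw]; simp only [if_neg hl]
        · intro j _ hjne
          rw [if_neg]
          intro hcon
          apply hjne
          have := congrFun hcon t₀
          rw [hw] at this
          simp only [if_neg ht₀] at this
          rw [← this, hj t₀ ht₀]
        · intro h; exact absurd (Finset.mem_univ _) h
      · intro i _ hine
        apply Finset.sum_eq_zero
        intro j _
        rw [if_neg]
        intro hcon
        apply hine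
        have := congrFun hcon s₀
        rw [hw] at this
        simp only [if_pos hs₀] at this
        rw [← this, hi s₀ hs₀]
      · intro h; exact absurd (Finset.mem_univ _) h
    · rw [if_neg hc]
      symm
      apply Finset.sum_eq_zero
      intro i _
      apply Finset.sum_eq_zero
      intro j _
      rw [if_neg]
      intro hcon
      apply hc
      constructor
      · exact ⟨i, fun l hl => by rw [hcon, hw]; simp only [if_pos hl]⟩
      · exact ⟨j, fun l hl => by rw [hcon, hw]; simp only [if_neg hl]⟩
  rw [Matrix.trace, Finset.sum_congr rfl (fun a _ => (h0 a).trans (h1 a)), Finset.sum_comm]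
  have h2 : ∀ i : Fin dd, (∑ a : PIdx k fun _ => dd, ∑ j : Fin dd,
      if a = w i j then (1 : ℂ) else 0) = (dd : ℂ) := by
    intro i
    rw [Finset.sum_comm,
      Finset.sum_congr rfl (fun j _ => Fintype.sum_ite_eq' (w i j) (fun _ => (1 : ℂ)))]
    simp
  rw [Finset.sum_congr rfl (fun i _ => h2 i), Finset.sum_const, Finset.card_univ,
    Fintype.card_fin, nsmul_eq_mul]

lemma tau0_sq (hk : 0 < k) (hd : 0 < dd) :
    ((((dd : ℝ)⁻¹ : ℝ) : ℂ) • GHZ k dd) * ((((dd : ℝ)⁻¹ : ℝ) : ℂ) • GHZ k dd)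
      = (((dd : ℝ)⁻¹ : ℝ) : ℂ) • ((((dd : ℝ)⁻¹ : ℝ) : ℂ) • GHZ k dd) := by
  rw [Matrix.smul_mul, Matrix.mul_smul, GHZ_sq hk hd, smul_smul]

lemma flog_zero : (if (0 : ℝ) ≤ 0 then (0 : ℝ) else Real.logb 2 0) = 0 := if_pos le_rfl

lemma matLog2_GHZ (hk : 0 < k) (hd : 0 < dd) : matLog2 (GHZ k dd) = 0 := by
  rw [matLog2, dif_pos (GHZ_isHermitian hk)]
  rw [Aux.herCfc_of_sq (GHZ_isHermitian hk) (c := 1) one_ne_zero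
    (by rw [GHZ_sq hk hd]; norm_num) flog_zero]
  norm_num [Real.logb_one]

lemma matLog2_tau0 (hk : 0 < k) (hd : 2 ≤ dd) :
    matLog2 ((((dd : ℝ)⁻¹ : ℝ) : ℂ) • GHZ k dd)
      = ((-Real.logb 2 dd : ℝ) : ℂ) • GHZ k dd := by
  have hd0 : 0 < dd := by omega
  have hdR : (0 : ℝ) < (dd : ℝ) := by exact_mod_cast hd0
  have hherm : ((((dd : ℝ)⁻¹ : ℝ) : ℂ) • GHZ k dd).IsHermitian :=
    Aux.herm_smul (GHZ_isHermitian hk) _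
  rw [matLog2, dif_pos hherm]
  rw [Aux.herCfc_of_sq hherm (c := (dd : ℝ)⁻¹)
    ((by positivity : (0 : ℝ) < (dd : ℝ)⁻¹).ne') (tau0_sq hk hd0) flog_zero]
  have hfc : (if ((dd : ℝ)⁻¹ : ℝ) ≤ 0 then (0 : ℝ) else Real.logb 2 ((dd : ℝ)⁻¹))
      = -Real.logb 2 dd := by
    rw [if_neg (not_le.mpr (by positivity)), Real.logb_inv]
  rw [hfc, smul_smul, ← Complex.ofReal_mul]
  congr 2
  field_simp

lemma suppLE_tau0 (hd : 0 < dd) :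
    SuppLE (GHZ k dd) ((((dd : ℝ)⁻¹ : ℝ) : ℂ) • GHZ k dd) := by
  intro v h
  rw [Matrix.smul_mulVec] at h
  have hne : (((dd : ℝ)⁻¹ : ℝ) : ℂ) ≠ 0 := by
    simp only [ne_eq, Complex.ofReal_eq_zero]
    positivity
  exact (smul_eq_zero.mp h).resolve_left hne

lemma relEnt_GHZ_tau0 (hk : 0 < k) (hd : 2 ≤ dd) :
    relEnt (GHZ k dd) ((((dd : ℝ)⁻¹ : ℝ) : ℂ) • GHZ k dd)
      = ((Real.logb 2 dd : ℝ) : EReal) := by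
  have hd0 : 0 < dd := by omega
  rw [relEnt, if_pos (suppLE_tau0 hd0)]
  have h1 : matLog2 (GHZ k dd) - matLog2 ((((dd : ℝ)⁻¹ : ℝ) : ℂ) • GHZ k dd)
      = ((Real.logb 2 dd : ℝ) : ℂ) • GHZ k dd := by
    rw [matLog2_GHZ hk hd0, matLog2_tau0 hk hd, zero_sub, ← neg_smul, ← Complex.ofReal_neg,
      neg_neg]
  rw [h1, Matrix.mul_smul, GHZ_sq hk hd0, Matrix.trace_smul, GHZ_trace hk hd0, smul_eq_mul,
    mul_one, Complex.ofReal_re]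

lemma traceNorm_pt_tau0 (hk : 0 < k) {S : Finset (Fin k)} (hS : S ∈ Bipartitions k)
    (hd : 0 < dd) :
    traceNorm (partialTranspose S ((((dd : ℝ)⁻¹ : ℝ) : ℂ) • GHZ k dd)) = 1 := by
  have hdR : (0 : ℝ) < (dd : ℝ) := by exact_mod_cast hd
  set c : ℝ := (dd : ℝ)⁻¹ with hc
  set W := partialTranspose S (GHZ k dd) with hW
  set Y := partialTranspose S (((c : ℝ) : ℂ) • GHZ k dd) with hY
  have hYW : Y = ((c : ℝ) : ℂ) • W := AuxPT.pt_smul S _ _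
  have hYherm : Y.IsHermitian :=
    AuxPT.pt_isHermitian S (Aux.herm_smul (GHZ_isHermitian hk) c)
  have hWW : W * W = (((c ^ 2 : ℝ)) : ℂ) • Qmat S := ptGHZ_sq hk hS
  have hYY : Yᴴ * Y = (((c ^ 2 * c ^ 2 : ℝ)) : ℂ) • Qmat S := by
    rw [hYherm.eq, hYW, Matrix.smul_mul, Matrix.mul_smul, hWW, smul_smul, smul_smul]
    congr 1
    push_cast
    ring
  set C : Matrix (PIdx k fun _ => dd) (PIdx k fun _ => dd) ℂ := ((c ^ 2 : ℝ) : ℂ) • Qmat S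
    with hC
  have hCpsd : C.PosSemidef := Aux.psd_smul (Qmat_posSemidef S) (sq_nonneg c)
  have hCsq : C ^ 2 = Yᴴ * Y := by
    rw [pow_two, hC, Matrix.smul_mul, Matrix.mul_smul, Qmat_sq, smul_smul, hYY,
      ← Complex.ofReal_mul]
  rw [Aux.traceNorm_eq_of_sq hCpsd hCsq, hC, Matrix.trace_smul, trace_Qmat hk hS, smul_eq_mul]
  have : ((c ^ 2 : ℝ) : ℂ) * ((dd : ℂ) * dd) = ((c ^ 2 * (dd * dd) : ℝ) : ℂ) := by
    push_cast
    ring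
  rw [this, Complex.ofReal_re, hc]
  field_simp

lemma tau0_mem (hk : 2 ≤ k) (hd : 0 < dd) :
    ((((dd : ℝ)⁻¹ : ℝ) : ℂ) • GHZ k dd) ∈ RainsSet k (fun _ => dd) := by
  have hk0 : 0 < k := by omega
  set τ₀ := (((dd : ℝ)⁻¹ : ℝ) : ℂ) • GHZ k dd with hτ₀
  set S₀ : Finset (Fin k) := {(⟨1, by omega⟩ : Fin k)} with hS₀def
  have hS₀ : S₀ ∈ Bipartitions k := by
    rw [Bipartitions, Finset.mem_filter]
    refine ⟨Finset.mem_univ _, Finset.singleton_nonempty _, ?_⟩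
    intro i hi
    rw [hS₀def, Finset.mem_singleton] at hi
    subst hi
    simp
  refine ⟨Aux.psd_smul (GHZ_posSemidef hk0) (by positivity), fun S => if S = S₀ then τ₀ else 0,
    ?_, ?_, ?_⟩
  · intro S _
    dsimp only
    by_cases h : S = S₀
    · rw [if_pos h]
      exact Aux.psd_smul (GHZ_posSemidef hk0) (by positivity)
    · rw [if_neg h]
      exact Matrix.PosSemidef.zero
  · rw [Finset.sum_ite_eq' (Bipartitions k) S₀ (fun _ => τ₀), if_pos hS₀]
  · have h1 : ∀ S ∈ Bipartitions k,
        traceNorm (partialTranspose S (if S = S₀ then τ₀ else 0))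
          = if S = S₀ then 1 else 0 := by
      intro S hSmem
      by_cases h : S = S₀
      · rw [if_pos h, if_pos h, hτ₀, traceNorm_pt_tau0 hk0 hSmem hd]
      · rw [if_neg h, if_neg h, AuxPT.pt_zero, Aux.traceNorm_zero]
    rw [Finset.sum_congr rfl h1, Finset.sum_ite_eq' (Bipartitions k) S₀ (fun _ => (1 : ℝ)),
      if_pos hS₀]


/-- The overlap vector of the eigenbasis with the unnormalized GHZ vector. -/
noncomputable def uvec {τ : Matrix (PIdx k fun _ => dd) (PIdx k fun _ => dd) ℂ}
    (hH : τ.IsHermitian) : (PIdx k fun _ => dd) → ℂ :=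
  (star hH.eigenvectorUnitary : Matrix (PIdx k fun _ => dd) (PIdx k fun _ => dd) ℂ).mulVec
    (phi k dd)

/-- Squared overlaps. -/
noncomputable def Pw {τ : Matrix (PIdx k fun _ => dd) (PIdx k fun _ => dd) ℂ}
    (hH : τ.IsHermitian) : (PIdx k fun _ => dd) → ℝ := fun i => Complex.normSq (uvec hH i)

lemma Pw_nonneg {τ : Matrix (PIdx k fun _ => dd) (PIdx k fun _ => dd) ℂ}
    (hH : τ.IsHermitian) (i : PIdx k fun _ => dd) : 0 ≤ Pw hH i :=
  Complex.normSq_nonneg _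

lemma star_uvec {τ : Matrix (PIdx k fun _ => dd) (PIdx k fun _ => dd) ℂ}
    (hH : τ.IsHermitian) (j : PIdx k fun _ => dd) :
    star (uvec hH j) = ∑ a, phi k dd a *
      (hH.eigenvectorUnitary : Matrix (PIdx k fun _ => dd) (PIdx k fun _ => dd) ℂ) a j := by
  rw [uvec, Matrix.mulVec, dotProduct, star_sum]
  apply Finset.sum_congr rfl
  intro a _
  rw [star_mul', Matrix.star_apply, star_star, phi_star]
  ring

lemma key_trace (hk : 0 < k) {τ : Matrix (PIdx k fun _ => dd) (PIdx k fun _ => dd) ℂ}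
    (hH : τ.IsHermitian) (g : (PIdx k fun _ => dd) → ℂ) :
    (GHZ k dd * Aux.sand hH g).trace = (dd : ℂ)⁻¹ * ∑ i, g i * ((Pw hH i : ℝ) : ℂ) := by
  rw [GHZ_trace_mul hk]
  congr 1
  have hstep1 : ∑ a, ∑ b, phi k dd a * phi k dd b * (Aux.sand hH g) b a
      = dotProduct (phi k dd) ((Aux.sand hH g).mulVec (phi k dd)) := by
    rw [dotProduct, Finset.sum_comm]
    apply Finset.sum_congr rfl
    intro b _
    rw [Matrix.mulVec, dotProduct, Finset.mul_sum]
    apply Finset.sum_congr rfl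
    intro a _
    ring
  rw [hstep1]
  have hvec : (Matrix.diagonal g).mulVec (uvec hH) = fun i => g i * uvec hH i := by
    funext i
    rw [Matrix.mulVec_diagonal]
  have hstep2 : (Aux.sand hH g).mulVec (phi k dd) =
      (hH.eigenvectorUnitary : Matrix (PIdx k fun _ => dd) (PIdx k fun _ => dd) ℂ).mulVec
        (fun i => g i * uvec hH i) := by
    unfold Aux.sand
    rw [← Matrix.mulVec_mulVec, ← Matrix.mulVec_mulVec]
    rw [show (star hH.eigenvectorUnitary :
        Matrix (PIdx k fun _ => dd) (PIdx k fun _ => dd) ℂ).mulVec (phi k dd) = uvec hH from rfl,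
      hvec]
  rw [hstep2, dotProduct_mulVec]
  have hstep3 : Matrix.vecMul (phi k dd)
      (hH.eigenvectorUnitary : Matrix (PIdx k fun _ => dd) (PIdx k fun _ => dd) ℂ)
      = star (uvec hH) := by
    funext j
    rw [Matrix.vecMul, dotProduct, Pi.star_apply, star_uvec hH j]
  rw [hstep3, dotProduct]
  apply Finset.sum_congr rfl
  intro i _
  rw [Pi.star_apply]
  rw [show star (uvec hH i) * (g i * uvec hH i) = g i * (star (uvec hH i) * uvec hH i) from
    by ring]
  congr 1
  rw [Complex.star_def, ← Complex.normSq_eq_conj_mul_self]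
  rfl

set_option maxHeartbeats 1000000 in
lemma relEnt_lower (hk : 2 ≤ k) (hd : 2 ≤ dd)
    {τ : Matrix (PIdx k fun _ => dd) (PIdx k fun _ => dd) ℂ}
    (hτ : τ ∈ RainsSet k (fun _ => dd)) :
    ((Real.logb 2 dd : ℝ) : EReal) ≤ relEnt (GHZ k dd) τ := by
  have hk0 : 0 < k := by omega
  have hd0 : 0 < dd := by omega
  have hdC : (dd : ℂ) ≠ 0 := Nat.cast_ne_zero.mpr hd0.ne'
  have hdR : (0 : ℝ) < (dd : ℝ) := by exact_mod_cast hd0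
  obtain ⟨hpsd, f, hfpsd, hsum, htn⟩ := hτ
  rw [relEnt]
  by_cases hsupp : SuppLE (GHZ k dd) τ
  case neg => rw [if_neg hsupp]; exact le_top
  rw [if_pos hsupp]
  have hH : τ.IsHermitian := hpsd.1
  have hPnn : ∀ i, 0 ≤ Pw hH i := Pw_nonneg hH
  have hlamnn : ∀ i, 0 ≤ hH.eigenvalues i := fun i => hpsd.eigenvalues_nonneg i
  -- sum of Pw equals dd
  have hPsum : ∑ i, Pw hH i = (dd : ℝ) := by
    have h1 := key_trace hk0 hH (fun _ => (1 : ℂ))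
    rw [Aux.sand_one hH, Matrix.mul_one, GHZ_trace hk0 hd0] at h1
    have h2 : (1 : ℂ) = (dd : ℂ)⁻¹ * ((∑ i, Pw hH i : ℝ) : ℂ) := by
      rw [h1]
      congr 1
      rw [Complex.ofReal_sum]
      apply Finset.sum_congr rfl
      intro i _
      rw [one_mul]
    field_simp at h2
    exact_mod_cast h2.symm
  -- support condition
  have hsupp' : ∀ i, hH.eigenvalues i = 0 → Pw hH i = 0 := by
    intro i hli
    set V : Matrix (PIdx k fun _ => dd) (PIdx k fun _ => dd) ℂ :=
      (hH.eigenvectorUnitary : Matrix (PIdx k fun _ => dd) (PIdx k fun _ => dd) ℂ) with hV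
    have hcol : τ.mulVec (fun a => V a i) = 0 := by
      have hτs : τ = Aux.sand hH (fun j => (hH.eigenvalues j : ℂ)) := (Aux.sand_spectral hH).symm
      nth_rewrite 1 [hτs]
      unfold Aux.sand
      rw [← hV, ← Matrix.mulVec_mulVec, ← Matrix.mulVec_mulVec]
      have he : (star V).mulVec (fun a => V a i) = fun j => (1 : Matrix _ _ ℂ) j i := by
        funext j
        rw [show (1 : Matrix (PIdx k fun _ => dd) (PIdx k fun _ => dd) ℂ) j i
          = (star V * V) j i from by rw [Aux.star_mul_V hH]]
        rw [Matrix.mulVec, dotProduct, Matrix.mul_apply]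
      rw [he]
      have hz : (Matrix.diagonal fun j => (hH.eigenvalues j : ℂ)).mulVec
          (fun j => (1 : Matrix (PIdx k fun _ => dd) (PIdx k fun _ => dd) ℂ) j i) = 0 := by
        funext j
        rw [Matrix.mulVec_diagonal]
        by_cases hj : j = i
        · subst hj
          rw [hli]
          simp
        · rw [Matrix.one_apply_ne hj, mul_zero]
          rfl
      rw [hz, Matrix.mulVec_zero]
    have hGHZcol := hsupp _ hcol
    have heval := congrFun hGHZcol (fun _ => (⟨0, hd0⟩ : Fin dd))
    rw [GHZ_mulVec hk0, phi_const] at heval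
    simp only [Pi.zero_apply] at heval
    have hz2 : (∑ b, phi k dd b * V b i) = 0 := by
      have hne : (dd : ℂ)⁻¹ * 1 ≠ 0 := by
        rw [mul_one]
        exact inv_ne_zero hdC
      rcases mul_eq_zero.mp heval with h | h
      · exact absurd h hne
      · exact h
    have hui : uvec hH i = 0 := by
      have h3 : star (uvec hH i) = 0 := by rw [star_uvec hH i, ← hV, hz2]
      simpa using congrArg star h3
    rw [Pw, hui, map_zero]
  -- trace of GHZ * τ
  have htrace_tau : (GHZ k dd * τ).trace
      = (((dd : ℝ)⁻¹ * ∑ i, hH.eigenvalues i * Pw hH i : ℝ) : ℂ) := by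
    have h1 := key_trace hk0 hH (fun i => (hH.eigenvalues i : ℂ))
    rw [Aux.sand_spectral hH] at h1
    rw [h1, Complex.ofReal_mul, Complex.ofReal_inv, Complex.ofReal_natCast,
      Complex.ofReal_sum]
    congr 1
    apply Finset.sum_congr rfl
    intro i _
    rw [Complex.ofReal_mul]
  -- upper bound on the trace
  have hbound : ((GHZ k dd * τ).trace).re ≤ (dd : ℝ)⁻¹ := by
    rw [hsum, Finset.mul_sum, Matrix.trace_sum, Complex.re_sum]
    have hS : ∀ S ∈ Bipartitions k, ((GHZ k dd * f S).trace).re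
        ≤ (dd : ℝ)⁻¹ * traceNorm (partialTranspose S (f S)) := by
      intro S hSmem
      have hps := hfpsd S hSmem
      rw [show (GHZ k dd * f S).trace
        = (partialTranspose S (GHZ k dd) * partialTranspose S (f S)).trace from
        (AuxPT.trace_pt_mul_pt S _ _).symm]
      have hWh : (partialTranspose S (GHZ k dd)).IsHermitian := ptGHZ_isHermitian hk0 S
      have hform : ∀ v, (dotProduct (star v)
          ((partialTranspose S (GHZ k dd) * partialTranspose S (GHZ k dd)).mulVec v)).re
          ≤ ((dd : ℝ)⁻¹) ^ 2 * (dotProduct (star v) v).re := by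
        intro v
        rw [ptGHZ_sq hk0 hSmem, Matrix.smul_mulVec, dotProduct_smul,
          smul_eq_mul, Aux.re_real_mul]
        exact mul_le_mul_of_nonneg_left (Qmat_quadform S v) (sq_nonneg _)
      have heig := Aux.eig_sq_le hWh hform
      obtain ⟨hpm1, hpm2⟩ := Aux.smul_one_pm_posSemidef hWh (by positivity) heig
      exact Aux.trace_pairing_le (AuxPT.pt_isHermitian S hps.1) hpm1 hpm2
    calc ∑ S ∈ Bipartitions k, ((GHZ k dd * f S).trace).re
        ≤ ∑ S ∈ Bipartitions k, (dd : ℝ)⁻¹ * traceNorm (partialTranspose S (f S)) :=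
          Finset.sum_le_sum hS
      _ = (dd : ℝ)⁻¹ * ∑ S ∈ Bipartitions k, traceNorm (partialTranspose S (f S)) :=
          (Finset.mul_sum _ _ _).symm
      _ ≤ (dd : ℝ)⁻¹ * 1 := mul_le_mul_of_nonneg_left htn (by positivity)
      _ = (dd : ℝ)⁻¹ := mul_one _
  have hre : ((GHZ k dd * τ).trace).re
      = (dd : ℝ)⁻¹ * ∑ i, hH.eigenvalues i * Pw hH i := by
    rw [htrace_tau, Complex.ofReal_re]
  have hmRle : (dd : ℝ)⁻¹ * (∑ i, hH.eigenvalues i * Pw hH i) ≤ (dd : ℝ)⁻¹ := by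
    rw [hre] at hbound
    exact hbound
  have hmRpos : 0 < (dd : ℝ)⁻¹ * ∑ i, hH.eigenvalues i * Pw hH i := by
    have hnn : ∀ i ∈ (Finset.univ : Finset (PIdx k fun _ => dd)),
        0 ≤ hH.eigenvalues i * Pw hH i :=
      fun i _ => mul_nonneg (hlamnn i) (hPnn i)
    have hnn' : 0 ≤ ∑ i, hH.eigenvalues i * Pw hH i := Finset.sum_nonneg hnn
    rcases eq_or_lt_of_le hnn' with heq | hlt
    · exfalso
      have hall := (Finset.sum_eq_zero_iff_of_nonneg hnn).mp heq.symm
      have hP0 : ∀ i, Pw hH i = 0 := by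
        intro i
        rcases mul_eq_zero.mp (hall i (Finset.mem_univ i)) with h | h
        · exact hsupp' i h
        · exact h
      have : (dd : ℝ) = 0 := by
        rw [← hPsum]
        exact Finset.sum_eq_zero (fun i _ => hP0 i)
      linarith
    · exact mul_pos (by positivity) hlt
  -- evaluate relEnt
  have hlogτ : matLog2 τ = herCfc hH (fun x => if x ≤ 0 then 0 else Real.logb 2 x) := by
    rw [matLog2, dif_pos hH]
  have h1 : (GHZ k dd * herCfc hH (fun x => if x ≤ 0 then 0 else Real.logb 2 x)).trace
      = (dd : ℂ)⁻¹ * ∑ i, Complex.ofReal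
        (if hH.eigenvalues i ≤ 0 then (0 : ℝ) else Real.logb 2 (hH.eigenvalues i))
        * ((Pw hH i : ℝ) : ℂ) :=
    key_trace hk0 hH _
  have h2 : ((dd : ℂ)⁻¹ * ∑ i, Complex.ofReal
        (if hH.eigenvalues i ≤ 0 then (0 : ℝ) else Real.logb 2 (hH.eigenvalues i))
        * ((Pw hH i : ℝ) : ℂ))
      = Complex.ofReal ((dd : ℝ)⁻¹ * ∑ i,
        (if hH.eigenvalues i ≤ 0 then (0 : ℝ) else Real.logb 2 (hH.eigenvalues i))
          * Pw hH i) := by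
    rw [Complex.ofReal_mul, Complex.ofReal_inv, Complex.ofReal_natCast, Complex.ofReal_sum]
    congr 1
    apply Finset.sum_congr rfl
    intro i _
    rw [Complex.ofReal_mul]
  have hval : ((GHZ k dd * (matLog2 (GHZ k dd) - matLog2 τ)).trace).re
      = -((dd : ℝ)⁻¹ * ∑ i,
        (if hH.eigenvalues i ≤ 0 then (0 : ℝ) else Real.logb 2 (hH.eigenvalues i))
          * Pw hH i) := by
    rw [matLog2_GHZ hk0 hd0, zero_sub, Matrix.mul_neg, Matrix.trace_neg, Complex.neg_re,
      hlogτ, h1, h2, Complex.ofReal_re]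
  rw [hval, EReal.coe_le_coe_iff]
  -- Jensen
  have hjen := Aux.jensen_logb (fun i => (dd : ℝ)⁻¹ * Pw hH i) hH.eigenvalues
    (fun i => mul_nonneg (by positivity) (hPnn i)) hlamnn
    (by rw [← Finset.mul_sum, hPsum]; field_simp)
    (fun i hli => by show (dd : ℝ)⁻¹ * Pw hH i = 0; rw [hsupp' i hli, mul_zero])
    (m := (dd : ℝ)⁻¹ * ∑ i, hH.eigenvalues i * Pw hH i)
    (by rw [Finset.mul_sum]; apply Finset.sum_congr rfl; intro i _; ring)
    hmRpos
  have hlogle : Real.logb 2 ((dd : ℝ)⁻¹ * ∑ i, hH.eigenvalues i * Pw hH i)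
      ≤ Real.logb 2 ((dd : ℝ)⁻¹) :=
    Real.logb_le_logb_of_le one_lt_two hmRpos hmRle
  have hloginv : Real.logb 2 ((dd : ℝ)⁻¹) = -Real.logb 2 dd := Real.logb_inv _ _
  have hswap : ∑ i, ((dd : ℝ)⁻¹ * Pw hH i) *
        (if hH.eigenvalues i ≤ 0 then (0 : ℝ) else Real.logb 2 (hH.eigenvalues i))
      = (dd : ℝ)⁻¹ * ∑ i,
        (if hH.eigenvalues i ≤ 0 then (0 : ℝ) else Real.logb 2 (hH.eigenvalues i))
          * Pw hH i := by
    rw [Finset.mul_sum]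
    apply Finset.sum_congr rfl
    intro i _
    ring
  rw [← hswap]
  linarith [hjen]

end AuxGHZ

end

/-- the GMRE of the GHZ state equals `log₂ d`. -/
theorem stmt7 {k : ℕ} (hk : 2 ≤ k) (dd : ℕ) (hdd : 2 ≤ dd) :
    GMRE (GHZ k dd) = ((Real.logb 2 dd : ℝ) : EReal) := by
  have hk0 : 0 < k := by omega
  have hd0 : 0 < dd := by omega
  apply le_antisymm
  · have hle : GMRE (GHZ k dd) ≤ relEnt (GHZ k dd) ((((dd : ℝ)⁻¹ : ℝ) : ℂ) • GHZ k dd) := by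
      rw [GMRE]
      exact iInf₂_le _ (AuxGHZ.tau0_mem hk hd0)
    rw [AuxGHZ.relEnt_GHZ_tau0 hk0 hdd] at hle
    exact hle
  · rw [GMRE]
    apply le_iInf₂
    intro τ hτ
    exact AuxGHZ.relEnt_lower hk hdd hτ
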